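/- arXiv:0906.3131 — 5 statements merged into one kernel-verified Lean document; each statement's English description precedes it below -/
import Mathlib

section
/- Let f = f_{a,b,c} be a piecewise linear Lorenz map satisfying (AC), and let {p,q} be a nice pair for f with M_p and M_q the associated derivative products. If p + M_p·(c − p) ≤ q and q − M_q·(q − c) ≥ p (i.e. the nice pair corresponds to a renormalization of f), then (M_p − 1)(M_q − 1) ≤ 1. -/
/-- The piecewise linear Lorenz map `f_{a,b,c}` on `[0,1]`:
`f(x) = a x + 1 - a c` for `x < c`, `f(c) = 1` (left-continuity convention),
and `f(x) = b (x - c)` for `x > c`. -/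
noncomputable def lorenz (a b c : ℝ) : ℝ → ℝ := fun x =>
  if x < c then a * x + 1 - a * c
  else if x = c then 1
  else b * (x - c)

/-- The slope of `f_{a,b,c}`: `a` on the left of `c`, `b` on the right. -/
noncomputable def lorenzSlope (a b c : ℝ) : ℝ → ℝ := fun y =>
  if y ≤ c then a else b

/-- If a nice pair `{p,q}` corresponds to a renormalization of `f`, i.e. the one-sided
limits of `f^ℓ` at `c⁻` and of `f^r` at `c⁺` lie in `[p,q]`, then
`(M_p - 1)(M_q - 1) ≤ 1`. -/
theorem lorenz_nice_pair_renormalization_bound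
    (a b c : ℝ) (ha : 0 < a) (hb : 0 < b) (hc0 : 0 < c) (hc1 : c < 1)
    (hac : a * c ≤ 1) (hbc : b * (1 - c) ≤ 1)
    (hAC1 : 1 - a * c < c) (hAC2 : c < b * (1 - c))
    (p q : ℝ) (l r : ℕ)
    (hp0 : 0 ≤ p) (hpc : p < c) (hcq : c < q) (hq1 : q ≤ 1)
    (hl : 1 ≤ l) (hr : 1 ≤ r)
    (hpper : (lorenz a b c)^[l] p = p)
    (hqper : (lorenz a b c)^[r] q = q)
    (hpnice : ∀ j < l, c ∉ (lorenz a b c)^[j] '' Set.Ioo p c)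
    (hqnice : ∀ j < r, c ∉ (lorenz a b c)^[j] '' Set.Ioo c q)
    (Mp Mq : ℝ)
    (hMp : Mp = ∏ j ∈ Finset.range l, lorenzSlope a b c ((lorenz a b c)^[j] p))
    (hMq : Mq = ∏ j ∈ Finset.range r, lorenzSlope a b c ((lorenz a b c)^[j] q))
    (hleft : p + Mp * (c - p) ≤ q)
    (hright : p ≤ q - Mq * (q - c)) :
    (Mp - 1) * (Mq - 1) ≤ 1 := by
  have hslope : ∀ y : ℝ, 0 < lorenzSlope a b c y := by
    intro y
    unfold lorenzSlope
    split <;> [exact ha; exact hb]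
  have hMp0 : 0 < Mp := by
    rw [hMp]; exact Finset.prod_pos fun j _ => hslope _
  have hMq0 : 0 < Mq := by
    rw [hMq]; exact Finset.prod_pos fun j _ => hslope _
  have hu : (0:ℝ) < c - p := by linarith
  have hv : (0:ℝ) < q - c := by linarith
  have h3 : (Mp - 1) * (c - p) ≤ q - c := by nlinarith
  have h4 : (Mq - 1) * (q - c) ≤ c - p := by nlinarith
  rcases le_or_gt Mp 1 with h1 | h1 <;> rcases le_or_gt Mq 1 with h2 | h2
  · nlinarith
  · nlinarith
  · nlinarith
  · have h5 : ((Mp - 1) * (c - p)) * ((Mq - 1) * (q - c)) ≤ (q - c) * (c - p) := by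
      apply mul_le_mul h3 h4 (by nlinarith) (by linarith)
    nlinarith [mul_pos hu hv]
end

section
/- Let f = f_{a,b,c} be a piecewise linear Lorenz map satisfying (AC) with a < 1 < b, and suppose 1 − ac < c_*. Let A = [0, c_*] and c_1 = P_L − (ab)^{−1}(P_L − c_*). Then for every x ∈ [0,1] with x ≥ c_1 whose orbit has a finite first exit time n_A(x) from A, one has M_A(x) = ∏_{j=0}^{n_A(x)−1} Df(f^j(x)) > 1. -/
/-- Auxiliary potential function for the first-exit expansion argument. -/
noncomputable def lorenzPhi (a b c p D cst : ℝ) : ℝ → ℝ := fun z =>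
  if z ≤ cst then (p - z) / D
  else if z ≤ c then max 1 ((p - a * b * (z - cst)) / (a * b * D))
  else max a ((p - b * (z - c)) / (b * D))

/-- Suppose `a < 1 < b` and `f(0) = 1 - ac < c_*`, and let `A = [0, c_*]` and
`c_1 = P_L - (ab)⁻¹(P_L - c_*)`. For every `x ≥ c_1` in `[0,1]` whose orbit has a
finite first exit time `n` from `A`, the product of slopes up to time `n` is `> 1`. -/
theorem lorenz_first_exit_product_gt_one'
    (a b c : ℝ) (ha : 0 < a) (hb : 0 < b) (hc0 : 0 < c) (hc1 : c < 1)
    (hac : a * c ≤ 1) (hbc : b * (1 - c) ≤ 1)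
    (hAC1 : 1 - a * c < c) (hAC2 : c < b * (1 - c))
    (ha1 : a < 1) (hb1 : 1 < b)
    (PL cst c₁ : ℝ)
    (hPL : PL = b * (c - (1 - a * c)) / (a * b - 1))
    (hcst : cst = (c - (1 - a * c)) / a)
    (hc₁ : c₁ = PL - (PL - cst) / (a * b))
    (hf0 : 1 - a * c < cst) :
    ∀ x ∈ Set.Icc (0 : ℝ) 1, c₁ ≤ x →
      ∀ n : ℕ, 1 ≤ n →
        (lorenz a b c)^[n - 1] x ∈ Set.Icc 0 cst →
        (lorenz a b c)^[n] x ∉ Set.Icc 0 cst →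
        (∀ m : ℕ, 1 ≤ m → m < n →
          ¬((lorenz a b c)^[m - 1] x ∈ Set.Icc 0 cst ∧
            (lorenz a b c)^[m] x ∉ Set.Icc 0 cst)) →
        1 < ∏ j ∈ Finset.range n, lorenzSlope a b c ((lorenz a b c)^[j] x) := by
  intro x hx01 hxc1 n hn hmem hnotmem hmin
  obtain ⟨hx0, hx1⟩ := hx01
  have h1a : (0:ℝ) < 1 - a := by linarith
  have h1c : (0:ℝ) < 1 - c := by linarith
  have hac' : a * c < 1 := by nlinarith
  have hacpos : (0:ℝ) < 1 - a * c := by linarith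
  -- hf0 rewritten without division
  have hf0' : (1 + a) * (1 - a * c) < c := by
    have h := hf0
    rw [hcst, lt_div_iff₀ ha] at h
    linarith
  -- key inequality a^2 b > 1 + a
  have habk : 1 + a < a ^ 2 * b := by
    have t1 : 1 + a < c * (1 + a + a ^ 2) := by linarith
    have u : a ^ 2 * c < a ^ 2 * (b * (1 - c)) :=
      mul_lt_mul_of_pos_left hAC2 (by positivity)
    have t2 : (1 + a) * (1 - c) < a ^ 2 * b * (1 - c) := by linarith
    exact lt_of_mul_lt_mul_right t2 h1c.le
  have ha2b : 1 < a ^ 2 * b := by linarith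
  have habpos : (0:ℝ) < a * b := by positivity
  have hab : 1 < a * b := by
    have h4 : (0:ℝ) < (a * b) * (1 - a) := mul_pos habpos h1a
    linarith
  -- constants
  obtain ⟨p, hp⟩ : ∃ y : ℝ, y = (1 - a * c) / (1 - a) := ⟨_, rfl⟩
  obtain ⟨E, hE⟩ : ∃ y : ℝ, y = (1 - c) / (a * (1 - a)) := ⟨_, rfl⟩
  obtain ⟨m1, hm1⟩ : ∃ y : ℝ, y = (1 - a * c) / (b * (1 - c)) := ⟨_, rfl⟩
  obtain ⟨m2, hm2⟩ : ∃ y : ℝ, y = 1 / (a ^ 2 * b) := ⟨_, rfl⟩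
  obtain ⟨s, hs⟩ : ∃ y : ℝ, y = m1 + m2 - m1 * m2 := ⟨_, rfl⟩
  obtain ⟨D, hD⟩ : ∃ y : ℝ, y = a * E * s := ⟨_, rfl⟩
  have hb1c : (0:ℝ) < b * (1 - c) := by positivity
  have ha2bpos : (0:ℝ) < a ^ 2 * b := by positivity
  have hm1a : 0 < m1 := by rw [hm1]; exact div_pos hacpos hb1c
  have hm1b : m1 < 1 := by rw [hm1, div_lt_one hb1c]; linarith
  have hm2a : 0 < m2 := by rw [hm2]; positivity
  have hm2b : m2 < 1 := by rw [hm2, div_lt_one ha2bpos]; exact ha2b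
  have hs0 : 0 < s := by
    rw [hs]; linarith [mul_pos hm1a (sub_pos.mpr hm2b)]
  have hs1 : s < 1 := by
    rw [hs]; linarith [mul_pos (sub_pos.mpr hm1b) (sub_pos.mpr hm2b)]
  have hsm1 : m1 ≤ s := by
    rw [hs]; linarith [mul_pos hm2a (sub_pos.mpr hm1b)]
  have hsm2 : m2 ≤ s := by
    rw [hs]; linarith [mul_pos hm1a (sub_pos.mpr hm2b)]
  have hsm12 : m1 * m2 ≤ s := by
    rw [hs]; linarith [mul_pos hm1a (sub_pos.mpr hm2b), mul_pos hm2a (sub_pos.mpr hm1b)]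
  have hEpos : 0 < E := by rw [hE]; exact div_pos h1c (by positivity)
  have hDpos : 0 < D := by rw [hD]; exact mul_pos (mul_pos ha hEpos) hs0
  have hbD : (0:ℝ) < b * D := mul_pos hb hDpos
  have habD : (0:ℝ) < a * b * D := mul_pos habpos hDpos
  have hp1 : p * (1 - a) = 1 - a * c := by
    rw [hp]; field_simp
  have hpE : p - cst = E := by
    rw [hp, hE, hcst]; field_simp; ring
  have hEid : E * (a * (1 - a)) = 1 - c := by rw [hE]; field_simp
  have hm1id : m1 * (b * (1 - c)) = 1 - a * c := by rw [hm1]; field_simp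
  have hm2id : m2 * (a ^ 2 * b) = 1 := by rw [hm2]; field_simp
  have hpgt1 : 1 < p := by
    rw [hp, lt_div_iff₀ h1a]; linarith [mul_lt_mul_of_pos_left hc1 ha]
  have hcstpos : 0 < cst := by linarith
  have hacst : a * cst = c - 1 + a * c := by
    rw [hcst]; field_simp; ring
  have hcstltc : cst < c := by
    have h1 : a * cst < a * c := by linarith [hacst]
    exact lt_of_mul_lt_mul_left h1 ha.le
  -- (I4) E ≤ a*b*D
  have hEabD : E ≤ a * b * D := by
    have h1 : a ^ 2 * b * m2 ≤ a ^ 2 * b * s :=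
      mul_le_mul_of_nonneg_left hsm2 ha2bpos.le
    have h0 : 1 ≤ a ^ 2 * b * s := by linarith [hm2id, h1]
    have h2 : a * b * D = (a ^ 2 * b * s) * E := by rw [hD]; ring
    linarith [mul_le_mul_of_nonneg_left h0 hEpos.le, h2]
  -- (I3) p ≤ b*D
  have hpbD : p ≤ b * D := by
    have h1 : b * D * (1 - a) = s * (b * (1 - c)) := by
      rw [hD]; linear_combination (b * s) * hEid
    have h2 : p * (1 - a) ≤ b * D * (1 - a) := by
      rw [hp1, h1]
      linarith [mul_le_mul_of_nonneg_right hsm1 hb1c.le, hm1id]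
    exact le_of_mul_le_mul_right h2 h1a
  -- (I2) p ≤ a^2*b^2*D
  have hpab2D : p ≤ a ^ 2 * b ^ 2 * D := by
    have h1 : a ^ 2 * b ^ 2 * D * (1 - a) = s * (a ^ 2 * b ^ 2 * (1 - c)) := by
      rw [hD]; linear_combination (a ^ 2 * b ^ 2 * s) * hEid
    have h2 : m1 * m2 * (a ^ 2 * b ^ 2 * (1 - c)) = 1 - a * c := by
      linear_combination (m2 * (a ^ 2 * b)) * hm1id + (1 - a * c) * hm2id
    have hpos2 : (0:ℝ) < a ^ 2 * b ^ 2 * (1 - c) := by positivity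
    have h3 : p * (1 - a) ≤ a ^ 2 * b ^ 2 * D * (1 - a) := by
      rw [hp1, h1]
      linarith [mul_le_mul_of_nonneg_right hsm12 hpos2.le, h2]
    exact le_of_mul_le_mul_right h3 h1a
  -- (I5) D < a*E
  have hDaE : D < a * E := by
    rw [hD]
    linarith [mul_lt_mul_of_pos_left hs1 (mul_pos ha hEpos)]
  -- c₁ - cst
  have hc1cst : a * b * (c₁ - cst) = cst := by
    have h1 : a * b - 1 ≠ 0 := by
      have : (0:ℝ) < a * b - 1 := by linarith
      exact ne_of_gt this
    have e1 : PL * (a * b - 1) = b * (c - (1 - a * c)) := by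
      rw [hPL]; exact div_mul_cancel₀ _ h1
    have e2 : cst * a = c - (1 - a * c) := by
      rw [hcst]; exact div_mul_cancel₀ _ ha.ne'
    have e3 : c₁ * (a * b) = PL * (a * b) - (PL - cst) := by
      rw [hc₁]; field_simp
    linear_combination e3 + e1 - b * e2
  have hcstc1 : cst < c₁ := by
    by_contra h
    push_neg at h
    have h2 : a * b * (c₁ - cst) ≤ 0 :=
      mul_nonpos_iff.mpr (Or.inl ⟨habpos.le, by linarith⟩)
    linarith [hc1cst, hcstpos]
  -- the map f and its basic properties
  obtain ⟨f, hf⟩ : ∃ g : ℝ → ℝ, g = lorenz a b c := ⟨_, rfl⟩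
  rw [← hf] at hmem hnotmem hmin ⊢
  have hfle : ∀ z : ℝ, z ≤ c → f z = a * z + 1 - a * c := by
    intro z hz
    rw [hf]; unfold lorenz
    by_cases h : z < c
    · rw [if_pos h]
    · have hzc : z = c := le_antisymm hz (not_lt.mp h)
      rw [if_neg h, if_pos hzc, hzc]; ring
  have hfgt : ∀ z : ℝ, c < z → f z = b * (z - c) := by
    intro z hz
    rw [hf]; unfold lorenz
    rw [if_neg (by linarith), if_neg (by linarith)]
  have hslopele : ∀ z : ℝ, z ≤ c → lorenzSlope a b c z = a := by
    intro z hz; unfold lorenzSlope; rw [if_pos hz]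
  have hslopegt : ∀ z : ℝ, c < z → lorenzSlope a b c z = b := by
    intro z hz; unfold lorenzSlope; rw [if_neg (not_le.mpr hz)]
  have hslopepos : ∀ z : ℝ, 0 < lorenzSlope a b c z := by
    intro z; unfold lorenzSlope; split <;> assumption
  have hf01 : ∀ z : ℝ, 0 ≤ z → z ≤ 1 → 0 ≤ f z ∧ f z ≤ 1 := by
    intro z h0 h1
    by_cases hz : z ≤ c
    · rw [hfle z hz]
      constructor
      · linarith [mul_nonneg ha.le h0]
      · linarith [mul_le_mul_of_nonneg_left hz ha.le]
    · push_neg at hz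
      rw [hfgt z hz]
      constructor
      · exact mul_nonneg hb.le (by linarith)
      · linarith [mul_le_mul_of_nonneg_left (show z - c ≤ 1 - c by linarith) hb.le]
  -- the potential
  obtain ⟨Φ, hΦ⟩ : ∃ g : ℝ → ℝ, g = lorenzPhi a b c p D cst := ⟨_, rfl⟩
  have hΦA : ∀ z : ℝ, z ≤ cst → Φ z = (p - z) / D := by
    intro z hz; rw [hΦ]; unfold lorenzPhi; rw [if_pos hz]
  have hΦM : ∀ z : ℝ, cst < z → z ≤ c →
      Φ z = max 1 ((p - a * b * (z - cst)) / (a * b * D)) := by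
    intro z hz1 hz2; rw [hΦ]; unfold lorenzPhi
    rw [if_neg (not_le.mpr hz1), if_pos hz2]
  have hΦR : ∀ z : ℝ, c < z → Φ z = max a ((p - b * (z - c)) / (b * D)) := by
    intro z hz; rw [hΦ]; unfold lorenzPhi
    rw [if_neg (not_le.mpr (lt_trans hcstltc hz)), if_neg (not_le.mpr hz)]
  -- step lemma
  have hstep : ∀ z : ℝ, 0 ≤ z → z ≤ 1 → (z ≤ cst → f z ≤ cst) →
      Φ (f z) ≤ lorenzSlope a b c z * Φ z := by
    intro z h0 h1 hA
    by_cases hz1 : z ≤ cst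
    · -- A case : exact equality
      have hzc : z ≤ c := le_trans hz1 hcstltc.le
      have hfz : f z ≤ cst := hA hz1
      rw [hslopele z hzc, hΦA z hz1, hΦA _ hfz, hfle z hzc]
      have hnum : p - (a * z + 1 - a * c) = a * (p - z) := by
        linear_combination hp1
      rw [hnum, mul_div_assoc]
    · push_neg at hz1
      by_cases hzc : z ≤ c
      · -- M case
        have hfgtc : c < f z := by
          rw [hfle z hzc]
          have := mul_lt_mul_of_pos_left hz1 ha
          linarith [hacst]
        rw [hslopele z hzc, hΦM z hz1 hzc, hΦR _ hfgtc, hfle z hzc]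
        have hnum : b * (a * z + 1 - a * c - c) = a * b * (z - cst) := by
          linear_combination b * hacst
        rw [hnum]
        apply max_le
        · calc a = a * 1 := by ring
            _ ≤ a * max 1 ((p - a * b * (z - cst)) / (a * b * D)) :=
              mul_le_mul_of_nonneg_left (le_max_left _ _) ha.le
        · have heq : (p - a * b * (z - cst)) / (b * D)
              = a * ((p - a * b * (z - cst)) / (a * b * D)) := by
            field_simp
          rw [heq]
          exact mul_le_mul_of_nonneg_left (le_max_right _ _) ha.le
      · -- R case
        push_neg at hzc
        rw [hslopegt z hzc, hΦR z hzc, hfgt z hzc]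
        have hRge : a * b ≤ b * max a ((p - b * (z - c)) / (b * D)) := by
          have := mul_le_mul_of_nonneg_left
            (le_max_left a ((p - b * (z - c)) / (b * D))) hb.le
          linarith
        by_cases hw1 : b * (z - c) ≤ cst
        · rw [hΦA _ hw1]
          have heq : (p - b * (z - c)) / D = b * ((p - b * (z - c)) / (b * D)) := by
            field_simp
          rw [heq]
          exact mul_le_mul_of_nonneg_left (le_max_right _ _) hb.le
        · push_neg at hw1
          by_cases hw2 : b * (z - c) ≤ c
          · rw [hΦM _ hw1 hw2]
            apply max_le
            · linarith
            · have h2 : (p - a * b * (b * (z - c) - cst)) / (a * b * D) ≤ a * b := by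
                rw [div_le_iff₀ habD]
                have h3 : 0 ≤ a * b * (b * (z - c) - cst) :=
                  le_of_lt (mul_pos habpos (by linarith))
                linarith [hpab2D, h3]
              linarith
          · push_neg at hw2
            rw [hΦR _ hw2]
            apply max_le
            · have h5 : 0 < a * (b - 1) := mul_pos ha (by linarith)
              linarith
            · have h2 : (p - b * (b * (z - c) - c)) / (b * D) ≤ a * b := by
                rw [div_le_iff₀ hbD]
                have h3 : 0 ≤ b * (b * (z - c) - c) :=
                  le_of_lt (mul_pos hb (by linarith))
                have h4 : a ^ 2 * b ^ 2 * D ≤ a * b ^ 2 * D := by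
                  linarith [mul_pos (mul_pos (mul_pos habpos hb) hDpos) h1a]
                linarith [hpab2D, h3, h4]
              linarith
  -- base case : Φ x ≤ 1
  have hbase : Φ x ≤ 1 := by
    have hxcst : cst < x := lt_of_lt_of_le hcstc1 hxc1
    by_cases hxc : x ≤ c
    · rw [hΦM x hxcst hxc]
      apply max_le le_rfl
      rw [div_le_one habD]
      have h3 : a * b * (c₁ - cst) ≤ a * b * (x - cst) :=
        mul_le_mul_of_nonneg_left (by linarith) habpos.le
      rw [hc1cst] at h3
      linarith [hEabD, hpE]
    · push_neg at hxc
      rw [hΦR x hxc]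
      apply max_le ha1.le
      rw [div_le_one hbD]
      have h3 : 0 < b * (x - c) := mul_pos hb (by linarith)
      linarith
  -- orbit stays in [0,1]
  have horb : ∀ j : ℕ, 0 ≤ f^[j] x ∧ f^[j] x ≤ 1 := by
    intro j
    induction j with
    | zero => exact ⟨hx0, hx1⟩
    | succ k ih =>
      rw [Function.iterate_succ_apply']
      exact hf01 _ ih.1 ih.2
  -- main induction
  have key : ∀ j : ℕ, j ≤ n - 1 →
      Φ (f^[j] x) ≤ ∏ i ∈ Finset.range j, lorenzSlope a b c (f^[i] x) := by
    intro j
    induction j with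
    | zero => intro _; simpa using hbase
    | succ k ih =>
      intro hj
      have hk' : k ≤ n - 1 := Nat.le_of_succ_le hj
      have ihk := ih hk'
      rw [Finset.prod_range_succ, Function.iterate_succ_apply']
      have hnonexit : f^[k] x ≤ cst → f (f^[k] x) ≤ cst := by
        intro hcm
        have hmlt : k + 1 < n := by omega
        have hmin' := hmin (k + 1) (by omega) hmlt
        simp only [Nat.add_sub_cancel] at hmin'
        by_contra hgt
        push_neg at hgt
        apply hmin'
        refine ⟨Set.mem_Icc.mpr ⟨(horb k).1, hcm⟩, ?_⟩
        intro hmem'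
        rw [Function.iterate_succ_apply'] at hmem'
        exact absurd (Set.mem_Icc.mp hmem').2 (not_le.mpr hgt)
      have hstep' := hstep (f^[k] x) (horb k).1 (horb k).2 hnonexit
      calc Φ (f (f^[k] x)) ≤ lorenzSlope a b c (f^[k] x) * Φ (f^[k] x) := hstep'
        _ ≤ lorenzSlope a b c (f^[k] x) *
            ∏ i ∈ Finset.range k, lorenzSlope a b c (f^[i] x) :=
          mul_le_mul_of_nonneg_left ihk (hslopepos _).le
        _ = (∏ i ∈ Finset.range k, lorenzSlope a b c (f^[i] x)) *
            lorenzSlope a b c (f^[k] x) := by ring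
  -- conclusion
  obtain ⟨hy0, hycst⟩ := Set.mem_Icc.mp hmem
  have hkey := key (n - 1) le_rfl
  rw [hΦA _ hycst] at hkey
  have hysl : lorenzSlope a b c (f^[n - 1] x) = a :=
    hslopele _ (le_trans hycst hcstltc.le)
  have hnsplit : (∏ j ∈ Finset.range n, lorenzSlope a b c (f^[j] x))
      = (∏ j ∈ Finset.range (n - 1), lorenzSlope a b c (f^[j] x)) *
        lorenzSlope a b c (f^[n - 1] x) := by
    conv_lhs => rw [show n = (n - 1) + 1 by omega]
    rw [Finset.prod_range_succ]
  rw [hnsplit, hysl]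
  have h5 : E ≤ p - f^[n - 1] x := by linarith [hpE]
  have h6 : D < a * (p - f^[n - 1] x) := by
    calc D < a * E := hDaE
      _ ≤ a * (p - f^[n - 1] x) := mul_le_mul_of_nonneg_left h5 ha.le
  have h7 : 1 < (p - f^[n - 1] x) / D * a := by
    rw [mul_comm, ← mul_div_assoc, lt_div_iff₀ hDpos]
    linarith
  have h8 : (p - f^[n - 1] x) / D * a ≤
      (∏ j ∈ Finset.range (n - 1), lorenzSlope a b c (f^[j] x)) * a :=
    mul_le_mul_of_nonneg_right hkey ha.le
  linarith
end

section
/- Let f = f_{a,b,c} be a piecewise linear Lorenz map satisfying (AC) with a > 1 > b, and suppose b(1−c) > c^*. Let B = [c^*, 1] and c'_1 = P_R + (ab)^{−1}(c^* − P_R). Then for every x ∈ [0,1] with x ≤ c'_1 whose orbit has a finite first exit time n_B(x) from B, one has M_B(x) = ∏_{j=0}^{n_B(x)−1} Df(f^j(x)) > 1. -/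
set_option maxHeartbeats 1000000 in
/-- Suppose `a > 1 > b` and `f(1) = b(1-c) > c^*`, and let `B = [c^*, 1]` and
`c'_1 = P_R + (ab)⁻¹(c^* - P_R)`. For every `x ≤ c'_1` in `[0,1]` whose orbit has a
finite first exit time `n` from `B`, the product of slopes up to time `n` is `> 1`. -/
theorem lorenz_first_exit_product_gt_one_right'
    (a b c : ℝ) (ha : 0 < a) (hb : 0 < b) (hc0 : 0 < c) (hc1 : c < 1)
    (hac : a * c ≤ 1) (hbc : b * (1 - c) ≤ 1)
    (hAC1 : 1 - a * c < c) (hAC2 : c < b * (1 - c))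
    (ha1 : 1 < a) (hb1 : b < 1)
    (PR cstar c'₁ : ℝ)
    (hPR : PR = (a * b * c - (1 - a * c)) / (a * b - 1))
    (hcstar : cstar = c * (1 + b) / b)
    (hc'₁ : c'₁ = PR + (cstar - PR) / (a * b))
    (hf1 : cstar < b * (1 - c)) :
    ∀ x ∈ Set.Icc (0 : ℝ) 1, x ≤ c'₁ →
      ∀ n : ℕ, 1 ≤ n →
        (lorenz a b c)^[n - 1] x ∈ Set.Icc cstar 1 →
        (lorenz a b c)^[n] x ∉ Set.Icc cstar 1 →
        (∀ m : ℕ, 1 ≤ m → m < n →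
          ¬((lorenz a b c)^[m - 1] x ∈ Set.Icc cstar 1 ∧
            (lorenz a b c)^[m] x ∉ Set.Icc cstar 1)) →
        1 < ∏ j ∈ Finset.range n, lorenzSlope a b c ((lorenz a b c)^[j] x) := by
  intro x hx hxc n hn hin hout hmin
  clear hout hmin hx
  -- basic inequalities
  have hD : (0:ℝ) < a * c + b * (1 - c) - 1 := by nlinarith
  have hab : 1 < a * b := by
    nlinarith [mul_lt_mul_of_pos_left (show (1:ℝ) - c < a * c by linarith) hb]
  have hcb : cstar * b = c * (1 + b) := by
    rw [hcstar]; field_simp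
  have h3 : c * (1 + b) < b ^ 2 * (1 - c) := by
    nlinarith [mul_lt_mul_of_pos_right hf1 hb]
  have hab2 : 1 < a * b ^ 2 := by
    nlinarith [mul_lt_mul_of_pos_left (show (1:ℝ) - c < a * c by linarith)
      (show (0:ℝ) < b ^ 2 by positivity)]
  have habne : a * b - 1 ≠ 0 := by intro h; rw [sub_eq_zero] at h; linarith [h.symm ▸ hab]
  have hPR' : PR * (a * b - 1) = a * b * c - (1 - a * c) := by
    rw [hPR]; field_simp
  have hc'₁' : c'₁ * (a * b) = PR * (a * b) + (cstar - PR) := by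
    have habne' : a * b ≠ 0 := by positivity
    rw [hc'₁]; field_simp
  -- key identity : a*b*(c'₁ - c) + (1 - a*c) = cstar
  have hidentity : a * b * (c'₁ - c) + (1 - a * c) = cstar := by
    linear_combination hc'₁' + hPR'
  -- cstar - PR > 0
  have hPRstar : 0 < cstar - PR := by
    have e : (cstar - PR) * (b * (a * b - 1)) = b - c * (1 + b) := by
      linear_combination (a * b - 1) * hcb - b * hPR'
    have hbc1 : c * (1 + b) < b := by nlinarith
    nlinarith [mul_pos hb (sub_pos.2 hab)]
  have hc'₁star : c'₁ < cstar := by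
    have := div_lt_self hPRstar hab
    rw [hc'₁]; linarith
  have hccstar : c < cstar := by nlinarith
  -- branch formulas
  have hfL : ∀ y : ℝ, y ≤ c → lorenz a b c y = a * y + 1 - a * c := by
    intro y hy
    rcases hy.lt_or_eq with h | h
    · simp [lorenz, h]
    · subst h; simp [lorenz]
  have hfR : ∀ y : ℝ, c < y → lorenz a b c y = b * (y - c) := by
    intro y hy
    simp only [lorenz]
    rw [if_neg (lt_asymm hy), if_neg (ne_of_gt hy)]
  have hsL : ∀ y : ℝ, y ≤ c → lorenzSlope a b c y = a := by
    intro y hy; simp [lorenzSlope, hy]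
  have hsR : ∀ y : ℝ, c < y → lorenzSlope a b c y = b := by
    intro y hy; simp [lorenzSlope, not_le.2 hy]
  have hstep : ∀ j : ℕ, (lorenz a b c)^[j + 1] x = lorenz a b c ((lorenz a b c)^[j] x) :=
    fun j => Function.iterate_succ_apply' _ _ _
  -- the potential T
  set T : ℕ → ℝ := fun j =>
    (∏ i ∈ Finset.range j, lorenzSlope a b c ((lorenz a b c)^[i] x)) * c
      - (1 - b) * ((lorenz a b c)^[j] x) - b * c with hT
  have hstepL : ∀ j : ℕ, (lorenz a b c)^[j] x ≤ c →
      T (j + 1) = a * T j + (a * c + b * (1 - c) - 1) := by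
    intro j hj
    have h1 : (lorenz a b c)^[j + 1] x = a * ((lorenz a b c)^[j] x) + 1 - a * c := by
      rw [hstep j, hfL _ hj]
    have h2 : lorenzSlope a b c ((lorenz a b c)^[j] x) = a := hsL _ hj
    simp only [hT, Finset.prod_range_succ, h1, h2]
    ring
  have hstepR : ∀ j : ℕ, c < (lorenz a b c)^[j] x → T (j + 1) = b * T j := by
    intro j hj
    have h1 : (lorenz a b c)^[j + 1] x = b * ((lorenz a b c)^[j] x - c) := by
      rw [hstep j, hfR _ hj]
    have h2 : lorenzSlope a b c ((lorenz a b c)^[j] x) = b := hsR _ hj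
    simp only [hT, Finset.prod_range_succ, h1, h2]
    ring
  -- positivity propagates
  have hTpos : ∀ j m : ℕ, 0 < T j → 0 < T (j + m) := by
    intro j m hj
    induction m with
    | zero => simpa using hj
    | succ m ih =>
      rcases le_or_gt ((lorenz a b c)^[j + m] x) c with h' | h'
      · rw [Nat.add_succ, hstepL (j + m) h']
        nlinarith [mul_pos ha ih]
      · rw [Nat.add_succ, hstepR (j + m) h']
        exact mul_pos hb ih
  have hn1 : n - 1 + 1 = n := Nat.succ_pred_eq_of_pos hn
  have hA : cstar ≤ (lorenz a b c)^[n - 1] x := hin.1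
  have hcn1 : c < (lorenz a b c)^[n - 1] x := lt_of_lt_of_le hccstar hA
  have hXn : (lorenz a b c)^[n] x = b * ((lorenz a b c)^[n - 1] x - c) := by
    conv_lhs => rw [← hn1]
    rw [hstep, hfR _ hcn1]
  have hXnc : c ≤ (lorenz a b c)^[n] x := by
    rw [hXn]
    nlinarith [mul_nonneg hb.le (sub_nonneg.2 hA)]
  have hTn : 0 < T n := by
    rcases le_or_gt x c with hxcase | hxcase
    · -- x on the left branch : T 1 > 0
      have hT0 : 0 ≤ T 0 := by
        simp only [hT, Finset.prod_range_zero, Function.iterate_zero, id_eq]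
        nlinarith
      have hT1 : 0 < T 1 := by
        have := hstepL 0 (by simpa using hxcase)
        rw [zero_add] at this
        rw [this]
        nlinarith [mul_nonneg ha.le hT0]
      have := hTpos 1 (n - 1) hT1
      rwa [show 1 + (n - 1) = n by omega] at this
    · -- x on the right branch : T 2 > 0
      have hn2 : 2 ≤ n := by
        by_contra h
        have hn1' : n = 1 := by omega
        rw [hn1'] at hA
        simp only [Nat.sub_self, Function.iterate_zero, id_eq] at hA
        linarith
      have hX0 : c < (lorenz a b c)^[0] x := by simpa using hxcase
      have hX1 : (lorenz a b c)^[1] x = b * (x - c) := by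
        rw [Function.iterate_one, hfR _ hxcase]
      have hX1c : (lorenz a b c)^[1] x ≤ c := by
        rw [hX1]
        nlinarith [mul_nonneg hb.le (sub_nonneg.2 (le_of_lt (lt_of_le_of_lt hxc hc'₁star)))]
      have hX2 : (lorenz a b c)^[2] x = a * (b * (x - c)) + 1 - a * c := by
        rw [show (2:ℕ) = 1 + 1 from rfl, hstep, hfL _ hX1c, hX1]
      have hX2c : (lorenz a b c)^[2] x ≤ cstar := by
        rw [hX2]
        nlinarith [mul_nonneg (mul_pos ha hb).le (sub_nonneg.2 hxc)]
      have hT2 : 0 < T 2 := by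
        have e0 : lorenzSlope a b c ((lorenz a b c)^[0] x) = b := by
          simpa using hsR _ hxcase
        have e1 : lorenzSlope a b c ((lorenz a b c)^[1] x) = a := hsL _ hX1c
        simp only [hT, Finset.prod_range_succ, Finset.prod_range_zero, e0, e1, one_mul]
        nlinarith [mul_nonneg (mul_nonneg (sub_nonneg.2 hb1.le)
            (sub_nonneg.2 hX2c)) hb.le,
          mul_pos hc0 (sub_pos.2 hab2)]
      have := hTpos 2 (n - 2) hT2
      rwa [show 2 + (n - 2) = n by omega] at this
  -- conclusion
  have hfinal := hTn
  simp only [hT] at hfinal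
  nlinarith [mul_nonneg (sub_nonneg.2 hb1.le) (sub_nonneg.2 hXnc)]
end

section
/- Let f = f_{a,b,c} be a piecewise linear Lorenz map satisfying (AC) with a < 1 < b, suppose 1 − ac ≤ c_*, and let i = min{k ≥ 1 : f^k(0) > c} (which is finite and satisfies i ≥ 3). Let A = [0, c_*]. Then for every x ∈ [0,1] with x > c_* whose orbit has a finite first exit time n_A(x) from A, one has M_A(x) = ∏_{j=0}^{n_A(x)−1} Df(f^j(x)) ≥ b·a^i. -/
/-- Suppose `a < 1 < b`, `f(0) = 1 - ac ≤ c_*`, and let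
`i = min {k ≥ 1 : f^k(0) > c}` and `A = [0, c_*]`. For every `x > c_*` in `[0,1]`
whose orbit has a finite first exit time `n` from `A`, the product of slopes up to
time `n` is at least `b a^i`. -/
theorem lorenz_first_exit_product_ge_bai
    (a b c : ℝ) (ha : 0 < a) (hb : 0 < b) (hc0 : 0 < c) (hc1 : c < 1)
    (hac : a * c ≤ 1) (hbc : b * (1 - c) ≤ 1)
    (hAC1 : 1 - a * c < c) (hAC2 : c < b * (1 - c))
    (ha1 : a < 1) (hb1 : 1 < b)
    (cst : ℝ) (hcst : cst = (c - (1 - a * c)) / a)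
    (hf0 : 1 - a * c ≤ cst)
    (i : ℕ) (hi : 1 ≤ i)
    (hgt : c < (lorenz a b c)^[i] 0)
    (hmin : ∀ k : ℕ, 1 ≤ k → k < i → (lorenz a b c)^[k] 0 ≤ c) :
    ∀ x ∈ Set.Icc (0 : ℝ) 1, cst < x →
      ∀ n : ℕ, 1 ≤ n →
        (lorenz a b c)^[n - 1] x ∈ Set.Icc 0 cst →
        (lorenz a b c)^[n] x ∉ Set.Icc 0 cst →
        (∀ m : ℕ, 1 ≤ m → m < n →
          ¬((lorenz a b c)^[m - 1] x ∈ Set.Icc 0 cst ∧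
            (lorenz a b c)^[m] x ∉ Set.Icc 0 cst)) →
        b * a ^ i ≤ ∏ j ∈ Finset.range n, lorenzSlope a b c ((lorenz a b c)^[j] x) := by
  intro x hx hxc n hn hlast hexit hnoexit
  classical
  set F := lorenz a b c with hF
  set S := lorenzSlope a b c with hS
  have hcst_pos : 0 < cst := by
    rw [hcst]; apply div_pos (by linarith) ha
  have hcstc : cst < c := by
    rw [hcst, div_lt_iff₀ ha]; nlinarith
  have hkey : a * cst + 1 - a * c = c := by
    rw [hcst]; field_simp; ring
  have hab : 1 < a * b := by
    nlinarith [mul_pos hc0 (show (0:ℝ) < 1 - c by linarith)]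
  have hFlt : ∀ y : ℝ, y < c → F y = a * y + 1 - a * c := by
    intro y hy; simp [hF, lorenz, if_pos hy]
  have hFeq : F c = 1 := by simp [hF, lorenz]
  have hFgt : ∀ y : ℝ, c < y → F y = b * (y - c) := by
    intro y hy
    simp [hF, lorenz, not_lt.mpr hy.le, hy.ne']
  have hSa : ∀ y : ℝ, y ≤ c → S y = a := by
    intro y hy; simp [hS, lorenzSlope, if_pos hy]
  have hSb : ∀ y : ℝ, c < y → S y = b := by
    intro y hy; simp [hS, lorenzSlope, not_le.mpr hy]
  have hmapsto : ∀ y : ℝ, y ∈ Set.Icc (0:ℝ) 1 → F y ∈ Set.Icc (0:ℝ) 1 := by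
    intro y hy
    rcases lt_trichotomy y c with h | h | h
    · rw [hFlt y h]
      constructor <;> nlinarith [hy.1, hy.2]
    · rw [h, hFeq]; constructor <;> norm_num
    · rw [hFgt y h]
      constructor <;> nlinarith [hy.1, hy.2]
  have hiter_mem : ∀ k : ℕ, F^[k] x ∈ Set.Icc (0:ℝ) 1 := by
    intro k
    induction k with
    | zero => simpa using hx
    | succ k ih => rw [Function.iterate_succ_apply']; exact hmapsto _ ih
  have hjump : ∀ y : ℝ, cst < y → y ≤ c → c < F y := by
    intro y h1 h2
    rcases lt_or_eq_of_le h2 with h | h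
    · rw [hFlt y h]; nlinarith
    · rw [h, hFeq]; linarith
  -- `cst < F^[i-1] 0`
  have hL : cst < F^[i-1] 0 := by
    by_contra h
    push_neg at h
    have hlt : F^[i-1] 0 < c := lt_of_le_of_lt h hcstc
    have hieq : F^[i] 0 = F (F^[i-1] 0) := by
      conv_lhs => rw [show i = (i-1)+1 by omega]
      rw [Function.iterate_succ_apply']
    rw [hieq, hFlt _ hlt] at hgt
    nlinarith
  -- first entry time into A
  have hxA : x ∉ Set.Icc 0 cst := fun h => absurd h.2 (not_le.mpr hxc)
  have hpex : ∃ j : ℕ, F^[j] x ∈ Set.Icc 0 cst := ⟨n - 1, hlast⟩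
  obtain ⟨t, htmem, htmin, htn⟩ :
      ∃ t : ℕ, F^[t] x ∈ Set.Icc 0 cst ∧ (∀ j, j < t → F^[j] x ∉ Set.Icc 0 cst) ∧
        t ≤ n - 1 :=
    ⟨Nat.find hpex, Nat.find_spec hpex, fun j hj => Nat.find_min hpex hj,
      Nat.find_le hlast⟩
  have ht1 : 1 ≤ t := by
    rcases Nat.eq_zero_or_pos t with h | h
    · subst h
      exact absurd (by simpa using htmem) hxA
    · exact h
  -- the orbit stays in A from time t to n-1
  have hinA : ∀ j, t ≤ j → j ≤ n - 1 → F^[j] x ∈ Set.Icc 0 cst := by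
    intro j hj1
    induction j, hj1 using Nat.le_induction with
    | base => intro _; exact htmem
    | succ j hj ih =>
      intro hj2
      have hA : F^[j] x ∈ Set.Icc 0 cst := ih (by omega)
      by_contra hnot
      exact hnoexit (j+1) (by omega) (by omega)
        ⟨by simpa using hA, by simpa using hnot⟩
  -- slope at time t-1 is b
  have hprev : c < F^[t-1] x := by
    have hprevA : F^[t-1] x ∉ Set.Icc 0 cst := htmin (t-1) (by omega)
    have hgtc : cst < F^[t-1] x := by
      by_contra h; push_neg at h
      exact hprevA ⟨(hiter_mem _).1, h⟩
    by_contra h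
    push_neg at h
    have hc' := hjump _ hgtc h
    have heq : F^[t] x = F (F^[t-1] x) := by
      conv_lhs => rw [show t = (t-1)+1 by omega]
      rw [Function.iterate_succ_apply']
    rw [← heq] at hc'
    exact absurd htmem.2 (not_le.mpr (lt_trans hcstc hc'))
  -- `n < t + i` via comparison with the orbit of 0
  have hni : n < t + i := by
    by_contra hcon
    push_neg at hcon
    set y := F^[t] x with hy
    have hiterty : ∀ k : ℕ, F^[t+k] x = F^[k] y := by
      intro k
      rw [add_comm, Function.iterate_add_apply]
    have hcomp : ∀ k, k ≤ i - 1 → F^[k] 0 ≤ F^[k] y ∧ F^[k] y ≤ cst := by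
      intro k hk
      induction k with
      | zero => exact ⟨by simpa using htmem.1, by simpa using htmem.2⟩
      | succ k ih =>
        obtain ⟨h1, h2⟩ := ih (by omega)
        have hyc : F^[k] y < c := lt_of_le_of_lt h2 hcstc
        have h0c : F^[k] 0 < c := lt_of_le_of_lt h1 hyc
        have e1 : F^[k+1] y = a * F^[k] y + 1 - a * c := by
          rw [Function.iterate_succ_apply', hFlt _ hyc]
        have e0 : F^[k+1] 0 = a * F^[k] 0 + 1 - a * c := by
          rw [Function.iterate_succ_apply', hFlt _ h0c]
        refine ⟨?_, ?_⟩
        · rw [e0, e1]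
          have hmul := mul_le_mul_of_nonneg_left h1 ha.le
          linarith
        have hle1 : t ≤ t + (k+1) := Nat.le_add_right _ _
        have hle2 : t + (k+1) ≤ n - 1 := by omega
        have hmem := hinA (t+(k+1)) hle1 hle2
        rw [hiterty] at hmem
        exact hmem.2
    have hfin := hcomp (i-1) le_rfl
    linarith [hfin.1, hfin.2, hL]
  -- the pre-entry product of slopes is at least `a`
  have hQaux : ∀ m, m ≤ t - 1 →
      (a ≤ ∏ j ∈ Finset.range m, S (F^[j] x)) ∧
      ((m = 0 ∨ c < F^[m-1] x) → 1 ≤ ∏ j ∈ Finset.range m, S (F^[j] x)) := by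
    intro m hm
    induction m with
    | zero => exact ⟨by simpa using ha1.le, fun _ => by simp⟩
    | succ m ih =>
      obtain ⟨ih1, ih2⟩ := ih (by omega)
      have hmA : F^[m] x ∉ Set.Icc 0 cst := htmin m (by omega)
      have hmgt : cst < F^[m] x := by
        by_contra h; push_neg at h
        exact hmA ⟨(hiter_mem m).1, h⟩
      rw [Finset.prod_range_succ]
      rcases le_or_gt (F^[m] x) c with hcase | hcase
      · rw [hSa _ hcase]
        have hQm1 : 1 ≤ ∏ j ∈ Finset.range m, S (F^[j] x) := by
          apply ih2
          rcases Nat.eq_zero_or_pos m with h | h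
          · exact Or.inl h
          · right
            by_contra hcon
            push_neg at hcon
            have hprevA : F^[m-1] x ∉ Set.Icc 0 cst := htmin (m-1) (by omega)
            have hprevgt : cst < F^[m-1] x := by
              by_contra hh; push_neg at hh
              exact hprevA ⟨(hiter_mem _).1, hh⟩
            have hc' := hjump _ hprevgt hcon
            have heq : F^[m] x = F (F^[m-1] x) := by
              conv_lhs => rw [show m = (m-1)+1 by omega]
              rw [Function.iterate_succ_apply']
            rw [← heq] at hc'
            exact absurd hcase (not_le.mpr hc')
        constructor
        · calc a = 1 * a := (one_mul a).symm
            _ ≤ _ := mul_le_mul_of_nonneg_right hQm1 ha.le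
        · rintro (h | h)
          · exact absurd h (Nat.succ_ne_zero m)
          · simp only [Nat.add_sub_cancel] at h
            exact absurd hcase (not_le.mpr h)
      · rw [hSb _ hcase]
        have h2 := mul_le_mul_of_nonneg_right ih1 hb.le
        have h3 : 1 ≤ (∏ j ∈ Finset.range m, S (F^[j] x)) * b := by linarith
        exact ⟨by linarith, fun _ => h3⟩
  -- the product up to the entry time is at least `a * b`
  have hQ : a * b ≤ ∏ j ∈ Finset.range t, S (F^[j] x) := by
    have h1 := (hQaux (t-1) le_rfl).1
    have heq : ∏ j ∈ Finset.range t, S (F^[j] x)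
        = (∏ j ∈ Finset.range (t-1), S (F^[j] x)) * S (F^[t-1] x) := by
      conv_lhs => rw [show t = (t-1)+1 by omega]
      rw [Finset.prod_range_succ]
    rw [heq, hSb _ hprev]
    exact mul_le_mul_of_nonneg_right h1 hb.le
  -- the product from t to n-1 is `a^(n-t)`
  have hIco : ∏ j ∈ Finset.Ico t n, S (F^[j] x) = a ^ (n - t) := by
    rw [Finset.prod_congr rfl (fun j hj => ?_), Finset.prod_const, Nat.card_Ico]
    obtain ⟨hj1, hj2⟩ := Finset.mem_Ico.mp hj
    exact hSa _ (le_of_lt (lt_of_le_of_lt (hinA j hj1 (by omega)).2 hcstc))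
  have hsplit : (∏ j ∈ Finset.range t, S (F^[j] x)) * ∏ j ∈ Finset.Ico t n, S (F^[j] x)
      = ∏ j ∈ Finset.range n, S (F^[j] x) :=
    Finset.prod_range_mul_prod_Ico _ (by omega)
  rw [← hsplit, hIco]
  have hpow : a ^ i ≤ a ^ (n - t) * a := by
    rw [← pow_succ]
    exact pow_le_pow_of_le_one ha.le ha1.le (by omega)
  calc b * a ^ i ≤ b * (a ^ (n - t) * a) :=
        mul_le_mul_of_nonneg_left hpow hb.le
    _ = (a * b) * a ^ (n - t) := by ring
    _ ≤ (∏ j ∈ Finset.range t, S (F^[j] x)) * a ^ (n - t) :=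
        mul_le_mul_of_nonneg_right hQ (pow_nonneg ha.le _)
end

section
/- Let f = f_{a,b,c} be a piecewise linear Lorenz map satisfying (AC) with a < 1 < b, and suppose 1 − ac ≤ c_*. Then for every nice periodic point p < c of period ℓ, M_p = ∏_{j=0}^{ℓ−1} Df(f^j(p)) ≥ ab. -/
set_option maxHeartbeats 2000000 in
/-- Suppose `a < 1 < b` and `f(0) = 1 - ac ≤ c_*`. Then every nice periodic point
`p < c` of period `ℓ` satisfies `M_p ≥ ab`. -/
theorem lorenz_Mp_lower_bound
    (a b c : ℝ) (ha : 0 < a) (hb : 0 < b) (hc0 : 0 < c) (hc1 : c < 1)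
    (hac : a * c ≤ 1) (hbc : b * (1 - c) ≤ 1)
    (hAC1 : 1 - a * c < c) (hAC2 : c < b * (1 - c))
    (ha1 : a < 1) (hb1 : 1 < b)
    (cst : ℝ) (hcst : cst = (c - (1 - a * c)) / a)
    (hf0 : 1 - a * c ≤ cst)
    (p : ℝ) (l : ℕ)
    (hp0 : 0 ≤ p) (hpc : p < c) (hl : 1 ≤ l)
    (hpper : (lorenz a b c)^[l] p = p)
    (hpnice : ∀ j < l, c ∉ (lorenz a b c)^[j] '' Set.Ioo p c) :
    a * b ≤ ∏ j ∈ Finset.range l, lorenzSlope a b c ((lorenz a b c)^[j] p) := by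
  have h1a : (0:ℝ) < 1 - a := by linarith
  -- branch formulas
  have hFc : lorenz a b c c = 1 := by
    simp [lorenz]
  have hFle : ∀ y : ℝ, y ≤ c → lorenz a b c y = a * y + 1 - a * c := by
    intro y hy
    rcases lt_or_eq_of_le hy with h | h
    · simp [lorenz, h]
    · rw [h, hFc]; ring
  have hFgt : ∀ y : ℝ, c < y → lorenz a b c y = b * (y - c) := by
    intro y hy
    simp only [lorenz, if_neg (not_lt_of_gt hy), if_neg (ne_of_gt hy)]
  have hSle : ∀ y : ℝ, y ≤ c → lorenzSlope a b c y = a := by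
    intro y hy; simp only [lorenzSlope, if_pos hy]
  have hSgt : ∀ y : ℝ, c < y → lorenzSlope a b c y = b := by
    intro y hy; simp only [lorenzSlope, if_neg (not_le_of_gt hy)]
  have hSpos : ∀ y : ℝ, 0 < lorenzSlope a b c y := by
    intro y
    rcases le_or_gt y c with h | h
    · rw [hSle y h]; exact ha
    · rw [hSgt y h]; exact hb
  -- the virtual fixed point X of the left branch
  obtain ⟨X, hXdef⟩ : ∃ X : ℝ, X = (1 - a * c) / (1 - a) := ⟨_, rfl⟩
  have hXid : X * (1 - a) = 1 - a * c := by
    rw [hXdef]; exact div_mul_cancel₀ _ (ne_of_gt h1a)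
  have hX1 : 1 < X := by
    nlinarith [hXid, mul_pos ha (sub_pos.mpr hc1), h1a]
  -- f maps [0,1] into [0,1]
  have hmap : ∀ y : ℝ, 0 ≤ y → y ≤ 1 → 0 ≤ lorenz a b c y ∧ lorenz a b c y ≤ 1 := by
    intro y h0 h1
    rcases le_or_gt y c with h | h
    · rw [hFle y h]
      constructor
      · nlinarith [mul_nonneg ha.le h0]
      · nlinarith [mul_le_mul_of_nonneg_left h ha.le]
    · rw [hFgt y h]
      constructor
      · nlinarith [mul_nonneg hb.le (sub_nonneg.mpr h.le)]
      · nlinarith [mul_le_mul_of_nonneg_left (by linarith : y - c ≤ 1 - c) hb.le]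
  have horb : ∀ j : ℕ, 0 ≤ (lorenz a b c)^[j] p ∧ (lorenz a b c)^[j] p ≤ 1 := by
    intro j
    induction j with
    | zero =>
      simp only [Function.iterate_zero_apply]
      exact ⟨hp0, by linarith⟩
    | succ n ih =>
      rw [Function.iterate_succ_apply']
      exact hmap _ ih.1 ih.2
  -- key one-step inequality:  X - f y ≤ S y * (X - y)
  have hkey : b * c ≤ b * X - X := by
    have h2 : 0 < (b * X - X - b * c) * (1 - a) := by
      have e : (b * X - X - b * c) * (1 - a)
          = b * (X * (1 - a)) - (X * (1 - a)) - b * c * (1 - a) := by ring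
      rw [e, hXid]
      nlinarith
    nlinarith [h2, h1a]
  have hstep : ∀ y : ℝ, X - lorenz a b c y ≤ lorenzSlope a b c y * (X - y) := by
    intro y
    rcases le_or_gt y c with h | h
    · rw [hFle y h, hSle y h]
      nlinarith [hXid]
    · rw [hFgt y h, hSgt y h]
      nlinarith [hkey]
  have hit : ∀ j : ℕ, (lorenz a b c)^[j + 1] p = lorenz a b c ((lorenz a b c)^[j] p) :=
    fun j => Function.iterate_succ_apply' (lorenz a b c) j p
  -- chain inequality
  have chain : ∀ s n : ℕ, s ≤ n →
      X - (lorenz a b c)^[n] p ≤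
        (∏ j ∈ Finset.Ico s n, lorenzSlope a b c ((lorenz a b c)^[j] p)) *
          (X - (lorenz a b c)^[s] p) := by
    intro s n hsn
    induction n, hsn using Nat.le_induction with
    | base => simp
    | succ n hsn ih =>
      rw [Finset.prod_Ico_succ_top hsn]
      calc X - (lorenz a b c)^[n + 1] p
          ≤ lorenzSlope a b c ((lorenz a b c)^[n] p) * (X - (lorenz a b c)^[n] p) := by
            rw [hit n]; exact hstep _
        _ ≤ lorenzSlope a b c ((lorenz a b c)^[n] p) *
            ((∏ j ∈ Finset.Ico s n, lorenzSlope a b c ((lorenz a b c)^[j] p)) *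
              (X - (lorenz a b c)^[s] p)) :=
            mul_le_mul_of_nonneg_left ih (hSpos _).le
        _ = ((∏ j ∈ Finset.Ico s n, lorenzSlope a b c ((lorenz a b c)^[j] p)) *
              lorenzSlope a b c ((lorenz a b c)^[n] p)) *
            (X - (lorenz a b c)^[s] p) := by ring
  -- l ≥ 2
  have hl2 : 2 ≤ l := by
    by_contra hcon
    push_neg at hcon
    have hl1 : l = 1 := by omega
    subst hl1
    rw [Function.iterate_one] at hpper
    rw [hFle p hpc.le] at hpper
    have h1 := hpper
    have hpX : p < X := by linarith
    nlinarith [mul_pos (sub_pos.mpr hpX) h1a, h1, hXid]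
  -- x₁ ≥ c
  have hx1 : (lorenz a b c)^[1] p = a * p + 1 - a * c := by
    rw [Function.iterate_one]; exact hFle p hpc.le
  have hx1ge : c ≤ (lorenz a b c)^[1] p := by
    by_contra hlt
    push_neg at hlt
    have hlt' : a * p + 1 - a * c < c := by rw [← hx1]; exact hlt
    have hcstc : cst < c := by
      rw [hcst, div_lt_iff₀ ha]; nlinarith
    have hpcst : p < cst := by
      rw [hcst, lt_div_iff₀ ha]; nlinarith
    have hFcst : lorenz a b c cst = c := by
      rw [hFle cst hcstc.le, hcst, mul_comm, div_mul_cancel₀ _ (ne_of_gt ha)]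
      ring
    exact hpnice 1 (by omega)
      ⟨cst, ⟨hpcst, hcstc⟩, by rw [Function.iterate_one]; exact hFcst⟩
  rcases eq_or_lt_of_le hl2 with hl2e | hl3
  · -- case l = 2
    have hleq : l = 2 := hl2e.symm
    subst hleq
    have hx1ne : (lorenz a b c)^[1] p ≠ c := by
      intro hceq
      have h2 : (lorenz a b c)^[2] p = 1 := by
        rw [show (2:ℕ) = 1 + 1 from rfl, hit 1, hceq, hFc]
      rw [hpper] at h2
      linarith
    have hx1gt : c < (lorenz a b c)^[1] p := lt_of_le_of_ne hx1ge (Ne.symm hx1ne)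
    rw [Finset.prod_range_succ, Finset.prod_range_one]
    rw [show (lorenz a b c)^[0] p = p from rfl, hSle p hpc.le, hSgt _ hx1gt]
  · -- case l ≥ 3
    have hsplit : ∀ k : ℕ, k ≤ l →
        (∏ j ∈ Finset.Ico 0 k, lorenzSlope a b c ((lorenz a b c)^[j] p)) *
          (∏ j ∈ Finset.Ico k l, lorenzSlope a b c ((lorenz a b c)^[j] p))
          = ∏ j ∈ Finset.range l, lorenzSlope a b c ((lorenz a b c)^[j] p) := by
      intro k hk
      rw [Finset.prod_Ico_consecutive _ (Nat.zero_le k) hk, Finset.range_eq_Ico]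
    have hP3pos : 0 < ∏ j ∈ Finset.Ico 3 l, lorenzSlope a b c ((lorenz a b c)^[j] p) :=
      Finset.prod_pos fun j _ => hSpos _
    have hIco3 : ∏ j ∈ Finset.Ico 0 3, lorenzSlope a b c ((lorenz a b c)^[j] p)
        = lorenzSlope a b c ((lorenz a b c)^[0] p) *
            lorenzSlope a b c ((lorenz a b c)^[1] p) *
            lorenzSlope a b c ((lorenz a b c)^[2] p) := by
      rw [← Finset.range_eq_Ico, Finset.prod_range_succ, Finset.prod_range_succ,
        Finset.prod_range_one]
    have hIco2 : ∏ j ∈ Finset.Ico 0 2, lorenzSlope a b c ((lorenz a b c)^[j] p)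
        = lorenzSlope a b c ((lorenz a b c)^[0] p) *
            lorenzSlope a b c ((lorenz a b c)^[1] p) := by
      rw [← Finset.range_eq_Ico, Finset.prod_range_succ, Finset.prod_range_one]
    have hidp : a * (X - p) = X - (lorenz a b c)^[1] p := by
      rw [hx1]
      linear_combination (-1 : ℝ) * hXid
    rcases eq_or_lt_of_le hx1ge with hx1c | hx1gt
    · -- degenerate case x₁ = c
      have hx2 : (lorenz a b c)^[2] p = 1 := by
        rw [show (2:ℕ) = 1 + 1 from rfl, hit 1, ← hx1c, hFc]
      have hx3 : (lorenz a b c)^[3] p = b * (1 - c) := by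
        rw [show (3:ℕ) = 2 + 1 from rfl, hit 2, hx2]
        exact hFgt 1 hc1
      have hch := chain 3 l (by omega)
      rw [hpper, hx3] at hch
      have hX3pos : 0 < X - b * (1 - c) := by linarith
      have hXc : X - b * (1 - c) ≤ X - c := by linarith [hAC2]
      have hidc : a * (X - p) = X - c := by rw [hidp, ← hx1c]
      have hm := mul_le_mul_of_nonneg_left hch ha.le
      rw [hidc] at hm
      have hP3 : 1 ≤ a * ∏ j ∈ Finset.Ico 3 l, lorenzSlope a b c ((lorenz a b c)^[j] p) := by
        nlinarith [hm, hXc, hX3pos]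
      rw [← hsplit 3 (by omega), hIco3, show (lorenz a b c)^[0] p = p from rfl,
        hSle p hpc.le, ← hx1c, hSle c le_rfl, hx2, hSgt 1 hc1]
      nlinarith [hP3, mul_pos ha hb, hP3pos]
    · -- x₁ > c; then x₂ ≥ c
      have hx2v : (lorenz a b c)^[2] p = b * ((lorenz a b c)^[1] p - c) := by
        rw [show (2:ℕ) = 1 + 1 from rfl, hit 1]
        exact hFgt _ hx1gt
      have hx2ge : c ≤ (lorenz a b c)^[2] p := by
        by_contra hcon
        push_neg at hcon
        have h' : b * ((lorenz a b c)^[1] p - c) < c := by rw [← hx2v]; exact hcon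
        have hx1z : (lorenz a b c)^[1] p < c + c / b := by
          have h'' : (lorenz a b c)^[1] p - c < c / b := by
            rw [lt_div_iff₀ hb]; nlinarith
          linarith
        have hzgt : c < c + c / b := by
          have : 0 < c / b := div_pos hc0 hb
          linarith
        have hzlt : c + c / b < 1 := by
          have : c / b < 1 - c := by rw [div_lt_iff₀ hb]; nlinarith
          linarith
        have hyc : (c + c / b - (1 - a * c)) / a < c := by
          rw [div_lt_iff₀ ha]; nlinarith
        have hpy : p < (c + c / b - (1 - a * c)) / a := by
          rw [lt_div_iff₀ ha]
          nlinarith [hx1z, hx1]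
        have hFy : lorenz a b c ((c + c / b - (1 - a * c)) / a) = c + c / b := by
          rw [hFle _ hyc.le, mul_comm, div_mul_cancel₀ _ (ne_of_gt ha)]
          ring
        have hFz : lorenz a b c (c + c / b) = c := by
          rw [hFgt _ hzgt, add_sub_cancel_left, mul_comm, div_mul_cancel₀ _ (ne_of_gt hb)]
        have hiter : (lorenz a b c)^[2] ((c + c / b - (1 - a * c)) / a) = c := by
          rw [show (2:ℕ) = 1 + 1 from rfl, Function.iterate_succ_apply',
            Function.iterate_one, hFy, hFz]
        exact hpnice 2 (by omega) ⟨_, ⟨hpy, hyc⟩, hiter⟩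
      rcases eq_or_lt_of_le hx2ge with hx2c | hx2gt
      · -- degenerate case x₂ = c
        have hx3 : (lorenz a b c)^[3] p = 1 := by
          rw [show (3:ℕ) = 2 + 1 from rfl, hit 2, ← hx2c, hFc]
        have hch := chain 3 l (by omega)
        rw [hpper, hx3] at hch
        have hX1pos : 0 < X - 1 := by linarith
        have hx1le : (lorenz a b c)^[1] p ≤ 1 := (horb 1).2
        have hXx1 : X - 1 ≤ a * (X - p) := by rw [hidp]; linarith
        have hm := mul_le_mul_of_nonneg_left hch ha.le
        have hP3 : 1 ≤ a * ∏ j ∈ Finset.Ico 3 l, lorenzSlope a b c ((lorenz a b c)^[j] p) := by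
          nlinarith [hm, hXx1, hX1pos]
        rw [← hsplit 3 (by omega), hIco3, show (lorenz a b c)^[0] p = p from rfl,
          hSle p hpc.le, hSgt _ hx1gt, ← hx2c, hSle c le_rfl]
        nlinarith [hP3, mul_pos ha hb, hP3pos]
      · -- main case: x₁ > c, x₂ > c
        have hch := chain 2 l (by omega)
        rw [hpper] at hch
        have hx2le : (lorenz a b c)^[2] p ≤ 1 := (horb 2).2
        have hX2pos : 0 < X - (lorenz a b c)^[2] p := by linarith
        have hXx2 : X - (lorenz a b c)^[2] p ≤ X - p := by linarith
        have hP2 : 1 ≤ ∏ j ∈ Finset.Ico 2 l, lorenzSlope a b c ((lorenz a b c)^[j] p) := by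
          nlinarith [hch, hXx2, hX2pos]
        rw [← hsplit 2 (by omega), hIco2, show (lorenz a b c)^[0] p = p from rfl,
          hSle p hpc.le, hSgt _ hx1gt]
        nlinarith [hP2, mul_pos ha hb]
end
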